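/- Let g : (0,1) → [0,∞) be nonincreasing, δ > 0, and 0 < q₀ < q₁ < ∞. Then (∫₀¹ r^{δq₁ - 1} g(r)^{q₁} dr)^{1/q₁} ≤ C (∫₀¹ r^{δq₀ - 1} g(r)^{q₀} dr)^{1/q₀} for a constant C depending only on δ, q₀, q₁. -/

import Mathlib

open MeasureTheory Real Set

open scoped ENNReal

/-!
Since `g` is nonincreasing, `g r ^ q₀ * r ^ (δ q₀) / (δ q₀) = g r ^ q₀ * ∫₀ʳ t ^ (δ q₀ - 1) dt` is at
most `I := ∫₀¹ t ^ (δ q₀ - 1) g t ^ q₀ dt`, i.e. `(r ^ δ g r) ^ q₀ ≤ δ q₀ I`. Writing the integrand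
of the left-hand side as `r⁻¹ (r ^ δ g r) ^ q₁` and bounding the surplus power
`(r ^ δ g r) ^ (q₁ - q₀)` by `(δ q₀ I) ^ ((q₁ - q₀) / q₀)` gives
`∫₀¹ r ^ (δ q₁ - 1) g r ^ q₁ dr ≤ (δ q₀ I) ^ ((q₁ - q₀) / q₀) I`, and taking `q₁`-th roots yields
`C = (δ q₀) ^ ((q₁ - q₀) / (q₀ q₁))`.
-/

lemma ENNReal.rpow_le_rpow_mul_rpow_of_rpow_le {y B : ℝ≥0∞} {p q : ℝ} (hp : 0 < p) (hpq : p ≤ q)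
    (h : y ^ p ≤ B) : y ^ q ≤ B ^ ((q - p) / p) * y ^ p := by
  have he : 0 ≤ (q - p) / p := div_nonneg (sub_nonneg.2 hpq) hp.le
  calc y ^ q = (y ^ p) ^ ((q - p) / p) * y ^ p := by
        rw [← ENNReal.rpow_mul, mul_div_cancel₀ _ hp.ne',
          ← ENNReal.rpow_add_of_nonneg _ _ (sub_nonneg.2 hpq) hp.le, sub_add_cancel]
    _ ≤ B ^ ((q - p) / p) * y ^ p := by gcongr

lemma ENNReal.mul_rpow_sub_div_mul_self_rpow_one_div {c x : ℝ≥0∞} {p q : ℝ} (hp : 0 < p)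
    (hpq : p ≤ q) :
    ((c * x) ^ ((q - p) / p) * x) ^ (1 / q) = c ^ ((q - p) / (p * q)) * x ^ (1 / p) := by
  have hq : 0 < q := hp.trans_le hpq
  have he : 0 ≤ (q - p) / p := div_nonneg (sub_nonneg.2 hpq) hp.le
  calc ((c * x) ^ ((q - p) / p) * x) ^ (1 / q)
      = (c ^ ((q - p) / p) * x ^ ((q - p) / p + 1)) ^ (1 / q) := by
        rw [ENNReal.mul_rpow_of_nonneg _ _ he, ENNReal.rpow_add_of_nonneg _ _ he zero_le_one,
          ENNReal.rpow_one, mul_assoc]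
    _ = c ^ ((q - p) / p * (1 / q)) * x ^ (((q - p) / p + 1) * (1 / q)) := by
        rw [ENNReal.mul_rpow_of_nonneg _ _ (by positivity), ← ENNReal.rpow_mul, ← ENNReal.rpow_mul]
    _ = c ^ ((q - p) / (p * q)) * x ^ (1 / p) := by
        congr 2
        · field_simp
        · field_simp
          ring

lemma lintegral_Ioo_rpow_sub_one {a r : ℝ} (ha : 0 < a) (hr : 0 < r) :
    ∫⁻ t in Ioo 0 r, ENNReal.ofReal (t ^ (a - 1)) = ENNReal.ofReal (r ^ a / a) := by
  rw [← ofReal_integral_eq_lintegral_ofReal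
      ((intervalIntegral.integrableOn_Ioo_rpow_iff hr).2 (by linarith))
      (ae_restrict_of_forall_mem measurableSet_Ioo fun t ht => rpow_nonneg ht.1.le _),
    ← integral_Ioc_eq_integral_Ioo, ← intervalIntegral.integral_of_le hr.le,
    integral_rpow (Or.inl (by linarith)), sub_add_cancel, zero_rpow ha.ne', sub_zero]

lemma ofReal_rpow_mul_le_mul_setLIntegral_of_antitoneOn {g : ℝ → ℝ} {a p b r : ℝ}
    (hg : AntitoneOn g (Ioo 0 b)) (hg0 : ∀ t ∈ Ioo 0 b, 0 ≤ g t) (ha : 0 < a) (hp : 0 < p)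
    (hr : r ∈ Ioo 0 b) :
    ENNReal.ofReal (r ^ a * g r ^ p) ≤
      ENNReal.ofReal a * ∫⁻ t in Ioo 0 b, ENNReal.ofReal (t ^ (a - 1) * g t ^ p) := by
  have hmono : ∀ t ∈ Ioo 0 r, t ^ (a - 1) * g r ^ p ≤ t ^ (a - 1) * g t ^ p := fun t ht =>
    mul_le_mul_of_nonneg_left
      (rpow_le_rpow (hg0 r hr) (hg ⟨ht.1, ht.2.trans hr.2⟩ hr ht.2.le) hp.le)
      (rpow_nonneg ht.1.le _)
  calc ENNReal.ofReal (r ^ a * g r ^ p)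
      = ENNReal.ofReal a * (ENNReal.ofReal (r ^ a / a) * ENNReal.ofReal (g r ^ p)) := by
        rw [← ENNReal.ofReal_mul (by positivity [hr.1.le]), ← ENNReal.ofReal_mul ha.le]
        field_simp
    _ = ENNReal.ofReal a * ∫⁻ t in Ioo 0 r, ENNReal.ofReal (t ^ (a - 1) * g r ^ p) := by
        rw [← lintegral_Ioo_rpow_sub_one ha hr.1, ← lintegral_mul_const' _ _ ENNReal.ofReal_ne_top]
        congr 1
        refine setLIntegral_congr_fun measurableSet_Ioo fun t ht => ?_
        rw [ENNReal.ofReal_mul (rpow_nonneg ht.1.le _)]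
    _ ≤ ENNReal.ofReal a * ∫⁻ t in Ioo 0 r, ENNReal.ofReal (t ^ (a - 1) * g t ^ p) := by
        gcongr ENNReal.ofReal a * ?_
        exact setLIntegral_mono' measurableSet_Ioo fun t ht =>
          ENNReal.ofReal_le_ofReal (hmono t ht)
    _ ≤ _ := by
        gcongr ENNReal.ofReal a * ?_
        exact lintegral_mono_set (Ioo_subset_Ioo_right hr.2.le)

lemma ofReal_rpow_sub_one_mul_rpow {r x : ℝ} (δ : ℝ) {q : ℝ} (hr : 0 < r) (hx : 0 ≤ x)
    (hq : 0 ≤ q) :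
    ENNReal.ofReal (r ^ (δ * q - 1) * x ^ q) =
      ENNReal.ofReal r⁻¹ * ENNReal.ofReal (r ^ δ * x) ^ q := by
  rw [ENNReal.ofReal_rpow_of_nonneg (by positivity) hq, ← ENNReal.ofReal_mul (by positivity),
    mul_rpow (by positivity) hx, ← rpow_mul hr.le, rpow_sub_one hr.ne']
  ring_nf

lemma setLIntegral_rpow_weight_le_of_antitoneOn {g : ℝ → ℝ} {δ p q b : ℝ}
    (hg : AntitoneOn g (Ioo 0 b)) (hg0 : ∀ t ∈ Ioo 0 b, 0 ≤ g t) (hδ : 0 < δ) (hp : 0 < p)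
    (hpq : p ≤ q)
    (hI : ∫⁻ r in Ioo 0 b, ENNReal.ofReal (r ^ (δ * p - 1) * g r ^ p) ≠ ∞) :
    ∫⁻ r in Ioo 0 b, ENNReal.ofReal (r ^ (δ * q - 1) * g r ^ q) ≤
      (ENNReal.ofReal (δ * p) * ∫⁻ r in Ioo 0 b, ENNReal.ofReal (r ^ (δ * p - 1) * g r ^ p))
        ^ ((q - p) / p) * ∫⁻ r in Ioo 0 b, ENNReal.ofReal (r ^ (δ * p - 1) * g r ^ p) := by
  set I := ∫⁻ r in Ioo 0 b, ENNReal.ofReal (r ^ (δ * p - 1) * g r ^ p)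
  set B := ENNReal.ofReal (δ * p) * I
  have hB : B ^ ((q - p) / p) ≠ ∞ :=
    ENNReal.rpow_ne_top_of_nonneg (div_nonneg (sub_nonneg.2 hpq) hp.le)
      (ENNReal.mul_ne_top ENNReal.ofReal_ne_top hI)
  rw [← lintegral_const_mul' _ _ hB]
  refine setLIntegral_mono' measurableSet_Ioo fun r hr => ?_
  have hy : ENNReal.ofReal (r ^ δ * g r) ^ p ≤ B := by
    rw [ENNReal.ofReal_rpow_of_nonneg (by positivity [hg0 r hr, hr.1.le]) hp.le,
      mul_rpow (by positivity [hr.1.le]) (hg0 r hr), ← rpow_mul hr.1.le]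
    exact ofReal_rpow_mul_le_mul_setLIntegral_of_antitoneOn hg hg0 (mul_pos hδ hp) hp hr
  rw [ofReal_rpow_sub_one_mul_rpow δ hr.1 (hg0 r hr) (hp.le.trans hpq),
    ofReal_rpow_sub_one_mul_rpow δ hr.1 (hg0 r hr) hp.le, mul_left_comm]
  gcongr
  exact ENNReal.rpow_le_rpow_mul_rpow_of_rpow_le hp hpq hy

theorem stmt_16 (δ q₀ q₁ : ℝ) (hδ : 0 < δ) (hq₀ : 0 < q₀) (hq : q₀ < q₁) :
    ∃ C > 0, ∀ g : ℝ → ℝ, AntitoneOn g (Ioo (0 : ℝ) 1) →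
      (∀ r ∈ Ioo (0 : ℝ) 1, 0 ≤ g r) →
      (∫⁻ r in Ioo (0 : ℝ) 1,
          ENNReal.ofReal (r ^ (δ * q₁ - 1) * g r ^ q₁)) ^ (1 / q₁)
        ≤ ENNReal.ofReal C *
          (∫⁻ r in Ioo (0 : ℝ) 1,
            ENNReal.ofReal (r ^ (δ * q₀ - 1) * g r ^ q₀)) ^ (1 / q₀) := by
  have hδq₀ : 0 < δ * q₀ := mul_pos hδ hq₀
  refine ⟨(δ * q₀) ^ ((q₁ - q₀) / (q₀ * q₁)), rpow_pos_of_pos hδq₀ _, fun g hg hg0 => ?_⟩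
  rcases eq_or_ne (∫⁻ r in Ioo (0 : ℝ) 1, ENNReal.ofReal (r ^ (δ * q₀ - 1) * g r ^ q₀)) ∞
    with hI | hI
  · rw [hI, ENNReal.top_rpow_of_pos (by positivity),
      ENNReal.mul_top (ENNReal.ofReal_pos.2 (rpow_pos_of_pos hδq₀ _)).ne']
    exact le_top
  calc _ ≤ _ := ENNReal.rpow_le_rpow
        (setLIntegral_rpow_weight_le_of_antitoneOn hg hg0 hδ hq₀ hq.le hI)
        (by positivity [hq₀.trans hq])
    _ = _ := by
        rw [ENNReal.mul_rpow_sub_div_mul_self_rpow_one_div hq₀ hq.le,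
          ENNReal.ofReal_rpow_of_pos hδq₀]
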